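/- For every even integer n ≥ 6, with a = σ_{n-3}·T·α₀·σ_{n-3}⁻¹ and b = T·σ_{n-1}⁻¹·α₂ in EM_n, the conjugation relation a²·σ_k·a⁻² = σ_{k+2} holds in EM_n for every index k with 1 ≤ k ≤ n−3 and k ∉ {n−6, n−4}. -/

import Mathlib

/-!
The extended mapping class group `EM n` of the `n`-punctured sphere, presented with
generators `σ₁, …, σ_{n-1}`, `T` and relations:
`T² = 1`; `(T σᵢ)² = 1`; `σᵢσⱼ = σⱼσᵢ` for `|i - j| ≥ 2`;
`σᵢσⱼσᵢ = σⱼσᵢσⱼ` for `|i - j| = 1`;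
`σ₁⋯σ_{n-1} σ_{n-1}⋯σ₁ = 1`; `(σ₁⋯σ_{n-1})ⁿ = 1`.
-/

namespace SphereEMCG

/-- Generators: `none` is the reflection `T`; `some i` is the half-twist `σ_{i+1}`. -/
abbrev Gen (n : ℕ) := Option (Fin (n - 1))

/-- The generator `T` as an element of the free group. -/
def Tf (n : ℕ) : FreeGroup (Gen n) := FreeGroup.of (none : Gen n)

/-- The generator `σ_i` (for `1 ≤ i ≤ n - 1`) as an element of the free group. -/
def σf (n : ℕ) (i : ℕ) : FreeGroup (Gen n) :=
  if h : 1 ≤ i ∧ i ≤ n - 1 then FreeGroup.of (some ⟨i - 1, by omega⟩) else 1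

/-- The word `σ_a σ_{a+1} ⋯ σ_b` in the free group. -/
def σfProd (n : ℕ) (a b : ℕ) : FreeGroup (Gen n) :=
  ((List.range' a (b + 1 - a)).map (σf n)).prod

/-- The word `σ_b σ_{b-1} ⋯ σ_a` in the free group. -/
def σfProdRev (n : ℕ) (a b : ℕ) : FreeGroup (Gen n) :=
  ((List.range' a (b + 1 - a)).reverse.map (σf n)).prod

/-- The defining relations of the extended mapping class group of the
`n`-punctured sphere. -/
def rels (n : ℕ) : Set (FreeGroup (Gen n)) :=
  { r | r = Tf n * Tf n
      ∨ (∃ i, 1 ≤ i ∧ i ≤ n - 1 ∧ r = (Tf n * σf n i) * (Tf n * σf n i))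
      ∨ (∃ i j, 1 ≤ i ∧ i ≤ n - 1 ∧ 1 ≤ j ∧ j ≤ n - 1 ∧ (i + 2 ≤ j ∨ j + 2 ≤ i) ∧
          r = σf n i * σf n j * (σf n j * σf n i)⁻¹)
      ∨ (∃ i j, 1 ≤ i ∧ i ≤ n - 1 ∧ 1 ≤ j ∧ j ≤ n - 1 ∧ (i + 1 = j ∨ j + 1 = i) ∧
          r = σf n i * σf n j * σf n i * (σf n j * σf n i * σf n j)⁻¹)
      ∨ r = σfProd n 1 (n - 1) * σfProdRev n 1 (n - 1)
      ∨ r = (σfProd n 1 (n - 1)) ^ n }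

/-- The extended mapping class group of the `n`-punctured sphere, by its
standard presentation. -/
abbrev EM (n : ℕ) := PresentedGroup (rels n)

/-- The orientation-reversing mapping class `T` in `EM n`. -/
def T (n : ℕ) : EM n := PresentedGroup.mk (rels n) (Tf n)

/-- The half-twist `σ_i` in `EM n`. -/
def σ (n : ℕ) (i : ℕ) : EM n := PresentedGroup.mk (rels n) (σf n i)

/-- `α₀ = σ₁ ⋯ σ_{n-1}` in `EM n`. -/
def α₀ (n : ℕ) : EM n := PresentedGroup.mk (rels n) (σfProd n 1 (n - 1))

/-- `α₂ = σ₁ ⋯ σ_{n-3} σ_{n-2}²` in `EM n`. -/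
def α₂ (n : ℕ) : EM n := PresentedGroup.mk (rels n) (σfProd n 1 (n - 2) * σf n (n - 2))

variable {n : ℕ}

lemma mk_rel {r : FreeGroup (Gen n)} (h : r ∈ rels n) : PresentedGroup.mk (rels n) r = 1 :=
  (QuotientGroup.eq_one_iff _).mpr (Subgroup.subset_normalClosure h)

lemma T_mul_T : T n * T n = 1 := by
  have h := mk_rel (n := n) (Or.inl rfl)
  rw [map_mul] at h
  exact h

lemma T_inv : (T n)⁻¹ = T n :=
  inv_eq_of_mul_eq_one_right T_mul_T

lemma T_σ_T {i : ℕ} (h1 : 1 ≤ i) (h2 : i ≤ n - 1) :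
    T n * σ n i * T n = (σ n i)⁻¹ := by
  have h := mk_rel (n := n) (Or.inr (Or.inl ⟨i, h1, h2, rfl⟩))
  rw [map_mul, map_mul] at h
  have : T n * σ n i * (T n * σ n i) = 1 := h
  rw [eq_inv_iff_mul_eq_one, mul_assoc]
  exact this

lemma σ_comm {i j : ℕ} (h1 : 1 ≤ i) (h2 : i ≤ n - 1) (h3 : 1 ≤ j) (h4 : j ≤ n - 1)
    (h5 : i + 2 ≤ j ∨ j + 2 ≤ i) : Commute (σ n i) (σ n j) := by
  have h := mk_rel (n := n) (Or.inr (Or.inr (Or.inl ⟨i, j, h1, h2, h3, h4, h5, rfl⟩)))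
  rw [map_mul, map_inv, map_mul, mul_inv_eq_one] at h
  exact h

lemma σ_braid {i j : ℕ} (h1 : 1 ≤ i) (h2 : i ≤ n - 1) (h3 : 1 ≤ j) (h4 : j ≤ n - 1)
    (h5 : i + 1 = j ∨ j + 1 = i) :
    σ n i * σ n j * σ n i = σ n j * σ n i * σ n j := by
  have h := mk_rel (n := n)
    (Or.inr (Or.inr (Or.inr (Or.inl ⟨i, j, h1, h2, h3, h4, h5, rfl⟩))))
  rw [map_mul, map_inv, map_mul, map_mul, map_mul, mul_inv_eq_one] at h
  exact h

/-- Product `σ_a σ_{a+1} ⋯ σ_b` in `EM n`. -/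
def Pp (n a b : ℕ) : EM n := ((List.range' a (b + 1 - a)).map (σ n)).prod

lemma α₀_eq_Pp : α₀ n = Pp n 1 (n - 1) := by
  unfold α₀ σfProd Pp
  rw [map_list_prod, List.map_map]
  rfl

lemma Pp_split {a b c : ℕ} (h1 : a ≤ b + 1) (h2 : b ≤ c) :
    Pp n a c = Pp n a b * Pp n (b + 1) c := by
  have hl := List.range'_append_1 (s := a) (m := b + 1 - a) (n := c - b)
  rw [show a + (b + 1 - a) = b + 1 by omega, show b + 1 - a + (c - b) = c + 1 - a by omega] at hl
  unfold Pp
  rw [show c + 1 - (b + 1) = c - b by omega, ← hl, List.map_append, List.prod_append]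

lemma Pp_commute {j a b : ℕ} (hj1 : 1 ≤ j) (hj2 : j ≤ n - 1) (ha : 1 ≤ a) (hb : b ≤ n - 1)
    (h : j + 2 ≤ a ∨ b + 2 ≤ j) : Commute (σ n j) (Pp n a b) := by
  apply Commute.list_prod_right
  intro x hx
  simp only [List.mem_map, List.mem_range'] at hx
  obtain ⟨i, ⟨hi1, hi2⟩, rfl⟩ := hx
  exact σ_comm hj1 hj2 (by omega) (by omega) (by omega)

lemma Pp_pair {i : ℕ} : Pp n i (i + 1) = σ n i * σ n (i + 1) := by
  unfold Pp
  have : i + 1 + 1 - i = 2 := by omega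
  rw [this]
  simp [List.range', List.range'_succ]

lemma Pp_single {i : ℕ} : Pp n i i = σ n i := by
  unfold Pp
  have : i + 1 - i = 1 := by omega
  rw [this]
  simp [List.range']

/-- The key conjugation: `α₀ σ_i α₀⁻¹ = σ_{i+1}` for `1 ≤ i ≤ n - 2`. -/
lemma α₀_mul_σ {i : ℕ} (h1 : 1 ≤ i) (h2 : i ≤ n - 2) (hn : 3 ≤ n) :
    α₀ n * σ n i = σ n (i + 1) * α₀ n := by
  have hi1 : i ≤ n - 1 := by omega
  have hi2 : i + 1 ≤ n - 1 := by omega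
  have hsplit1 : Pp n 1 (n - 1) = Pp n 1 (i + 1) * Pp n (i + 2) (n - 1) :=
    Pp_split (by omega) (by omega)
  have hsplit2 : Pp n 1 (i + 1) = Pp n 1 (i - 1) * Pp n i (i + 1) := by
    have := Pp_split (n := n) (a := 1) (b := i - 1) (c := i + 1) (by omega) (by omega)
    rwa [show i - 1 + 1 = i by omega] at this
  have hc1 : Commute (σ n i) (Pp n (i + 2) (n - 1)) :=
    Pp_commute h1 hi1 (by omega) (le_refl _) (Or.inl (le_refl _))
  have hc2 : Commute (σ n (i + 1)) (Pp n 1 (i - 1)) := by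
    rcases Nat.eq_or_lt_of_le h1 with h | h
    · -- i = 1, so Pp n 1 0 is the empty product
      have : Pp n 1 (i - 1) = 1 := by
        unfold Pp
        have : i - 1 + 1 - 1 = 0 := by omega
        rw [this]; simp
      rw [this]; exact Commute.one_right _
    · exact Pp_commute (by omega) hi2 (by omega) (by omega) (Or.inr (by omega))
  have hbraid : σ n i * σ n (i + 1) * σ n i = σ n (i + 1) * σ n i * σ n (i + 1) :=
    σ_braid h1 hi1 (by omega) hi2 (Or.inl rfl)
  rw [α₀_eq_Pp, hsplit1, hsplit2, Pp_pair]
  calc Pp n 1 (i - 1) * (σ n i * σ n (i + 1)) * Pp n (i + 2) (n - 1) * σ n i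
      = Pp n 1 (i - 1) * (σ n i * σ n (i + 1) * σ n i) * Pp n (i + 2) (n - 1) := by
        rw [mul_assoc _ (Pp n (i + 2) (n - 1)) (σ n i), ← hc1.eq]
        group
    _ = Pp n 1 (i - 1) * (σ n (i + 1) * σ n i * σ n (i + 1)) * Pp n (i + 2) (n - 1) := by
        rw [hbraid]
    _ = σ n (i + 1) * (Pp n 1 (i - 1) * (σ n i * σ n (i + 1)) * Pp n (i + 2) (n - 1)) := by
        rw [show Pp n 1 (i - 1) * (σ n (i + 1) * σ n i * σ n (i + 1))
            = Pp n 1 (i - 1) * σ n (i + 1) * (σ n i * σ n (i + 1)) by group,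
          ← hc2.eq]
        group

lemma α₀_conj {i : ℕ} (h1 : 1 ≤ i) (h2 : i ≤ n - 2) (hn : 3 ≤ n) :
    α₀ n * σ n i * (α₀ n)⁻¹ = σ n (i + 1) := by
  rw [α₀_mul_σ h1 h2 hn, mul_assoc, mul_inv_cancel, mul_one]

lemma c_conj {k : ℕ} (h1 : 1 ≤ k) (h2 : k ≤ n - 3) (hn : 5 ≤ n) :
    (T n * α₀ n) ^ 2 * σ n k * ((T n * α₀ n) ^ 2)⁻¹ = σ n (k + 2) := by
  have tinv : (T n)⁻¹ = T n := T_inv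
  have s1 : α₀ n * σ n k * (α₀ n)⁻¹ = σ n (k + 1) := α₀_conj h1 (by omega) (by omega)
  have s2 : T n * σ n (k + 1) * T n = (σ n (k + 1))⁻¹ := T_σ_T (by omega) (by omega)
  have s3 : α₀ n * σ n (k + 1) * (α₀ n)⁻¹ = σ n (k + 2) := α₀_conj (by omega) (by omega) (by omega)
  have s4 : T n * σ n (k + 2) * T n = (σ n (k + 2))⁻¹ := T_σ_T (by omega) (by omega)
  have s3' : α₀ n * (σ n (k + 1))⁻¹ * (α₀ n)⁻¹ = (σ n (k + 2))⁻¹ := by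
    rw [← s3]; group
  have s4' : T n * (σ n (k + 2))⁻¹ * T n = σ n (k + 2) := by
    rw [← s4]
    simp only [← mul_assoc]
    rw [T_mul_T, one_mul, mul_assoc, T_mul_T, mul_one]
  calc (T n * α₀ n) ^ 2 * σ n k * ((T n * α₀ n) ^ 2)⁻¹
      = T n * (α₀ n * (T n * (α₀ n * σ n k * (α₀ n)⁻¹) * T n) * (α₀ n)⁻¹) * T n := by
        rw [sq]
        simp only [mul_inv_rev]
        rw [tinv]
        group
    _ = T n * (α₀ n * (T n * σ n (k + 1) * T n) * (α₀ n)⁻¹) * T n := by rw [s1]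
    _ = T n * (α₀ n * (σ n (k + 1))⁻¹ * (α₀ n)⁻¹) * T n := by rw [s2]
    _ = T n * (σ n (k + 2))⁻¹ * T n := by rw [s3']
    _ = σ n (k + 2) := s4'


end SphereEMCG

open SphereEMCG in
/-- For every even `n ≥ 6` and `a = σ_{n-3} T α₀ σ_{n-3}⁻¹` in the extended
mapping class group of the `n`-punctured sphere, `a² σ_k a⁻² = σ_{k+2}` for all
`1 ≤ k ≤ n - 3` with `k ∉ {n - 6, n - 4}`. -/
theorem a_sq_conjugation (n : ℕ) (hn : 6 ≤ n) (heven : Even n)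
    (k : ℕ) (hk1 : 1 ≤ k) (hk2 : k ≤ n - 3) (hk3 : k ≠ n - 6) (hk4 : k ≠ n - 4) :
    (σ n (n - 3) * T n * α₀ n * (σ n (n - 3))⁻¹) ^ 2 * σ n k *
      ((σ n (n - 3) * T n * α₀ n * (σ n (n - 3))⁻¹) ^ 2)⁻¹ = σ n (k + 2) := by
  set s := σ n (n - 3) with hs
  have hasq : (s * T n * α₀ n * s⁻¹) ^ 2 = s * (T n * α₀ n) ^ 2 * s⁻¹ := by
    rw [sq, sq]; group
  have hcomm1 : s⁻¹ * σ n k * s = σ n k := by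
    rcases eq_or_ne k (n - 3) with h | h
    · rw [h, hs]; group
    · have hc : Commute s (σ n k) :=
        σ_comm (by omega) (by omega) (by omega) (by omega) (by omega)
      rw [hc.inv_left.eq, mul_assoc, inv_mul_cancel, mul_one]
  have hcomm2 : s * σ n (k + 2) * s⁻¹ = σ n (k + 2) := by
    rcases eq_or_ne (k + 2) (n - 3) with h | h
    · rw [h, hs]; group
    · have hc : Commute s (σ n (k + 2)) :=
        σ_comm (by omega) (by omega) (by omega) (by omega) (by omega)
      rw [hc.eq, mul_assoc, mul_inv_cancel, mul_one]
  have key : (T n * α₀ n) ^ 2 * σ n k * ((T n * α₀ n) ^ 2)⁻¹ = σ n (k + 2) :=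
    c_conj hk1 hk2 (by omega)
  calc (s * T n * α₀ n * s⁻¹) ^ 2 * σ n k * ((s * T n * α₀ n * s⁻¹) ^ 2)⁻¹
      = s * ((T n * α₀ n) ^ 2 * (s⁻¹ * σ n k * s) * ((T n * α₀ n) ^ 2)⁻¹) * s⁻¹ := by
        rw [hasq]; group
    _ = s * σ n (k + 2) * s⁻¹ := by rw [hcomm1, key]
    _ = σ n (k + 2) := hcomm2
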